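/- Expected stopping time of the multivariate ONS test: Let (Z⃗_t)_{t≥1} be i.i.d. random vectors taking values in [−1,1]^k, and suppose Δ_m := ‖E[Z⃗_1]‖_∞ > 0. Let (W_t)_{t≥1} be a nonnegative stochastic process satisfying, almost surely for all t ≥ 1 and all u ∈ ℝ^k with ‖u‖₁ = 1, ln(W_t) ≥ (1/4) · (Σ_{j=1}^t ⟨u, Z⃗_j⟩)² / (Σ_{j=1}^t ⟨u, Z⃗_j⟩² + |Σ_{j=1}^t ⟨u, Z⃗_j⟩|) − 2k ln(4t). Then for every α ∈ (0,1) the stopping time τ = inf{t ≥ 1 : W_t ≥ 1/α} satisfies E[τ] ≤ (288k/Δ_m²) ln(576k/Δ_m²) + (72/Δ_m²) ln(72/Δ_m²) + (72/Δ_m²) ln(1/α) + π²/6. -/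

import Mathlib

/-!
Choose a coordinate `i₀` at which `|E[Z₁]|` is maximal and the direction `u = ±e_{i₀}`, so that
the `X_j = ⟨u, Z_j⟩` are i.i.d. in `[-1, 1]` with mean `Δm`. On the event `S_n = ∑_{j ≤ n} X_j >
Δm n / 2` the log-wealth bound along `u` gives `ln W_n ≥ Δm² n / 32 - 2k ln (4n)`, which is at
least `ln (1/α)` once `n` exceeds the horizon `T = onsHorizon k Δm α`, so then `τ ≤ n`.
Hoeffding's inequality bounds the complementary event by `exp (-Δm² n / 8) ≤ 1 / n²`, hence
`E[τ] = ∑ P(τ > n) ≤ T + ∑ 1 / n² = T + π² / 6`.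
-/

open MeasureTheory ProbabilityTheory
open scoped ENNReal

/-- The stopping time `τ = inf {t ≥ 1 : W t ≥ 1/α}` (with value `∞` if the process never
crosses the threshold). -/
noncomputable def stopTime {Ω : Type*} (W : ℕ → Ω → ℝ) (α : ℝ) (ω : Ω) : ℕ∞ :=
  sInf {n : ℕ∞ | ∃ t : ℕ, n = (t : ℕ∞) ∧ 1 ≤ t ∧ 1 / α ≤ W t ω}

/-- The expected stopping time, computed as `E[τ] = ∑_{t ≥ 1} P(τ > t)`. -/
noncomputable def expStopTime {Ω : Type*} {m : MeasurableSpace Ω} (μ : Measure Ω)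
    (W : ℕ → Ω → ℝ) (α : ℝ) : ℝ≥0∞ :=
  ∑' t : ℕ, μ {ω | ((t + 1 : ℕ) : ℕ∞) < stopTime W α ω}

open Finset Real
open scoped NNReal

lemma Real.log_le_div_add_log {x s : ℝ} (hx : 0 < x) (hs : 0 < s) : log x ≤ x / s + log s := by
  have := log_le_sub_one_of_pos (div_pos hx hs)
  rw [log_div hx.ne' hs.ne'] at this
  linarith

noncomputable def onsHorizon (K Δ α : ℝ) : ℝ :=
  288 * K / Δ ^ 2 * log (576 * K / Δ ^ 2) + 72 / Δ ^ 2 * log (72 / Δ ^ 2) +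
    72 / Δ ^ 2 * log (1 / α)

section Horizon

variable {K Δ α x : ℝ}

lemma log_div_sq_nonneg {c : ℝ} (hc : 1 ≤ c) (hΔ : 0 < Δ) (hΔ1 : Δ ≤ 1) :
    0 ≤ log (c / Δ ^ 2) :=
  log_nonneg <| (le_div_iff₀ (by positivity)).2 <| by nlinarith

lemma onsHorizon_nonneg (hK : 1 ≤ K) (hΔ : 0 < Δ) (hΔ1 : Δ ≤ 1) (hα : 0 < α) (hα1 : α ≤ 1) :
    0 ≤ onsHorizon K Δ α := by
  have := log_div_sq_nonneg (c := 576 * K) (by linarith) hΔ hΔ1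
  have := log_div_sq_nonneg (c := 72) (by norm_num) hΔ hΔ1
  have := log_nonneg (one_le_one_div hα hα1)
  unfold onsHorizon
  positivity

lemma sq_mul_le_of_onsHorizon_le (hΔ : Δ ≠ 0) (h : onsHorizon K Δ α ≤ x) :
    288 * K * log (576 * K / Δ ^ 2) + 72 * log (72 / Δ ^ 2) + 72 * log (1 / α) ≤ Δ ^ 2 * x := by
  calc _ = Δ ^ 2 * onsHorizon K Δ α := by unfold onsHorizon; field_simp
    _ ≤ Δ ^ 2 * x := by gcongr

lemma log_one_div_add_log_le_of_onsHorizon_le (hK : 1 ≤ K) (hΔ : 0 < Δ) (hΔ1 : Δ ≤ 1)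
    (hα : 0 < α) (hα1 : α ≤ 1) (hx : 0 < x) (h : onsHorizon K Δ α ≤ x) :
    log (1 / α) + 2 * K * log (4 * x) ≤ Δ ^ 2 * x / 32 := by
  have hK0 : 0 < K := by linarith
  have h₁ := mul_nonneg hK0.le (log_div_sq_nonneg (c := 576 * K) (by linarith) hΔ hΔ1)
  have h₂ := log_div_sq_nonneg (c := 72) (by norm_num) hΔ hΔ1
  have h₃ := log_nonneg (one_le_one_div hα hα1)
  have hscaled := sq_mul_le_of_onsHorizon_le hΔ.ne' h
  have hlog := mul_le_mul_of_nonneg_left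
    (log_le_div_add_log (by positivity : 0 < 4 * x) (by positivity : 0 < 576 * K / Δ ^ 2))
    (by positivity : 0 ≤ 2 * K)
  have hrate : 2 * K * (4 * x / (576 * K / Δ ^ 2)) = Δ ^ 2 * x / 72 := by field_simp; ring
  rw [mul_add, hrate] at hlog
  linarith

lemma exp_neg_le_one_div_sq_of_onsHorizon_le (hK : 1 ≤ K) (hΔ : 0 < Δ) (hΔ1 : Δ ≤ 1)
    (hα : 0 < α) (hα1 : α ≤ 1) (hx : 0 < x) (h : onsHorizon K Δ α ≤ x) :
    exp (-Δ ^ 2 * x / 8) ≤ 1 / x ^ 2 := by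
  have h₁ := mul_nonneg (by linarith : 0 ≤ K)
    (log_div_sq_nonneg (c := 576 * K) (by linarith) hΔ hΔ1)
  have h₂ := log_div_sq_nonneg (c := 72) (by norm_num) hΔ hΔ1
  have h₃ := log_nonneg (one_le_one_div hα hα1)
  have hscaled := sq_mul_le_of_onsHorizon_le hΔ.ne' h
  have hlog := log_le_div_add_log hx (by positivity : 0 < 72 / Δ ^ 2)
  have hrate : x / (72 / Δ ^ 2) = Δ ^ 2 * x / 72 := by field_simp
  rw [one_div, ← exp_log (by positivity : 0 < x ^ 2), ← exp_neg, log_pow]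
  exact exp_le_exp.2 (by push_cast; linarith)

end Horizon

lemma tsum_le_ofReal_add_pi_sq_div_six (p : ℕ → ℝ≥0∞) {T : ℝ} (hT : 0 ≤ T)
    (h_one : ∀ t, p t ≤ 1)
    (h_sq : ∀ t : ℕ, T ≤ t + 1 → p t ≤ ENNReal.ofReal (1 / ((t : ℝ) + 1) ^ 2)) :
    ∑' t, p t ≤ ENNReal.ofReal (T + π ^ 2 / 6) := by
  have hzeta : HasSum (fun t : ℕ => 1 / ((t : ℝ) + 1) ^ 2) (π ^ 2 / 6) := by
    simpa using (hasSum_nat_add_iff' 1).2 hasSum_zeta_two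
  calc ∑' t, p t
      ≤ ∑' t, ((if t < ⌊T⌋₊ then 1 else 0) + ENNReal.ofReal (1 / ((t : ℝ) + 1) ^ 2)) := by
        refine ENNReal.tsum_le_tsum fun t => ?_
        split_ifs with ht
        · exact (h_one t).trans le_self_add
        · rw [zero_add]
          refine h_sq t ((Nat.lt_floor_add_one T).le.trans ?_)
          exact_mod_cast Nat.succ_le_succ (not_lt.1 ht)
    _ = ⌊T⌋₊ + ENNReal.ofReal (π ^ 2 / 6) := by
        rw [ENNReal.tsum_add, ← ENNReal.ofReal_tsum_of_nonneg (fun t => by positivity)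
          hzeta.summable, hzeta.tsum_eq, tsum_eq_sum (s := range ⌊T⌋₊) (by simp),
          sum_ite_of_true fun t ht => mem_range.1 ht]
        simp
    _ ≤ ENNReal.ofReal (T + π ^ 2 / 6) := by
        rw [ENNReal.ofReal_add hT (by positivity), ← ENNReal.ofReal_natCast]
        gcongr
        exact Nat.floor_le hT

lemma measure_sum_range_le_half_le_exp {Ω : Type*} {m : MeasurableSpace Ω} {μ : Measure Ω}
    [IsProbabilityMeasure μ] {X : ℕ → Ω → ℝ} {Δ : ℝ} (hΔ : 0 ≤ Δ)
    (hmeas : ∀ t, AEMeasurable (X t) μ) (hindep : iIndepFun X μ)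
    (hbdd : ∀ t, ∀ᵐ ω ∂μ, X t ω ∈ Set.Icc (-1 : ℝ) 1) (hmean : ∀ t, Δ ≤ μ[X t]) (n : ℕ) :
    μ {ω | ∑ t ∈ range n, X t ω ≤ Δ * n / 2} ≤ ENNReal.ofReal (exp (-Δ ^ 2 * n / 8)) := by
  set Y : ℕ → Ω → ℝ := fun t ω => μ[X t] - X t ω
  have hY : ∀ t < n, HasSubgaussianMGF (Y t) 1 μ := fun t _ => by
    have := (hasSubgaussianMGF_of_mem_Icc (hmeas t) (hbdd t)).neg
    convert this using 1
    · ext; simp [Y]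
    · norm_num
  have hYindep : iIndepFun Y μ :=
    hindep.comp (fun t (y : ℝ) => (∫ ω, X t ω ∂μ) - y) fun t => by fun_prop
  have hsub : {ω | ∑ t ∈ range n, X t ω ≤ Δ * n / 2} ⊆
      {ω | Δ * n / 2 ≤ ∑ t ∈ range n, Y t ω} := by
    intro ω hω
    have : Δ * n ≤ ∑ t ∈ range n, μ[X t] := by
      simpa [mul_comm] using sum_le_sum fun t (_ : t ∈ range n) => hmean t
    simp only [Set.mem_ofPred_eq, Y, sum_sub_distrib] at hω ⊢
    linarith
  have hexp : -(Δ * n / 2) ^ 2 / (2 * n * ((1 : ℝ≥0) : ℝ)) = -Δ ^ 2 * n / 8 := by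
    rcases n.eq_zero_or_pos with rfl | hn
    · simp
    · push_cast; field_simp; ring
  calc μ {ω | ∑ t ∈ range n, X t ω ≤ Δ * n / 2}
      ≤ μ {ω | Δ * n / 2 ≤ ∑ t ∈ range n, Y t ω} := measure_mono hsub
    _ = ENNReal.ofReal (μ.real {ω | Δ * n / 2 ≤ ∑ t ∈ range n, Y t ω}) :=
        (ofReal_measureReal (measure_ne_top _ _)).symm
    _ ≤ ENNReal.ofReal (exp (-Δ ^ 2 * n / 8)) := by
        rw [← hexp]
        exact ENNReal.ofReal_le_ofReal
          (HasSubgaussianMGF.measure_sum_range_ge_le_of_iIndepFun hYindep hY (by positivity))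

lemma le_sq_sum_div_sum_sq_add_abs {ι : Type*} (s : Finset ι) (x : ι → ℝ)
    (hx : ∀ j ∈ s, |x j| ≤ 1) {c : ℝ} (hc : 0 ≤ c) (hsum : c * #s < ∑ j ∈ s, x j) :
    c ^ 2 * #s / 2 ≤ (∑ j ∈ s, x j) ^ 2 / (∑ j ∈ s, x j ^ 2 + |∑ j ∈ s, x j|) := by
  set S := ∑ j ∈ s, x j
  have hS : S ≤ #s := by
    simpa using sum_le_sum fun j hj => (abs_le.1 (hx j hj)).2
  have hQ : ∑ j ∈ s, x j ^ 2 ≤ #s := by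
    simpa using sum_le_sum fun j hj => (sq_le_one_iff_abs_le_one _).2 (hx j hj)
  have hS0 : 0 < S := (mul_nonneg hc (Nat.cast_nonneg _)).trans_lt hsum
  have hs0 : (0 : ℝ) < #s := hS0.trans_le hS
  rw [abs_of_pos hS0, le_div_iff₀ (by positivity)]
  calc c ^ 2 * #s / 2 * (∑ j ∈ s, x j ^ 2 + S) ≤ c ^ 2 * #s / 2 * (2 * #s) := by gcongr; linarith
    _ = (c * #s) ^ 2 := by ring
    _ ≤ S ^ 2 := by gcongr

section StoppingTime

variable {Ω : Type*} {W : ℕ → Ω → ℝ} {α : ℝ} {ω : Ω} {n : ℕ}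

lemma stopTime_le_of_log_le (hn : 1 ≤ n) (hα : 0 < α) (hα1 : α < 1) (hW : 0 ≤ W n ω)
    (hlog : log (1 / α) ≤ log (W n ω)) : stopTime W α ω ≤ n := by
  have hL : 0 < log (1 / α) := log_pos (one_lt_one_div hα hα1)
  have hWpos : 0 < W n ω := hW.lt_of_ne fun h => by rw [← h, log_zero] at hlog; linarith
  exact sInf_le ⟨n, rfl, hn, (log_le_log_iff (by positivity) hWpos).1 hlog⟩

end StoppingTime

section ScalarTest

variable {Ω : Type*} {m : MeasurableSpace Ω} {μ : Measure Ω} {X W : ℕ → Ω → ℝ} {K Δ α : ℝ}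

/-- The ONS wealth guarantee along one direction `u`, with `X j ω = ⟨u, Z j ω⟩`. -/
def LogWealthBound (X W : ℕ → Ω → ℝ) (K : ℝ) (ω : Ω) : Prop :=
  ∀ t : ℕ, 1 ≤ t →
    (1 / 4) * ((∑ j ∈ Icc 1 t, X j ω) ^ 2 /
        ((∑ j ∈ Icc 1 t, X j ω ^ 2) + |∑ j ∈ Icc 1 t, X j ω|)) -
      2 * K * log (4 * t) ≤ log (W t ω)

lemma measure_lt_stopTime_le_measure_sum_le {n : ℕ} (hα : 0 < α) (hα1 : α < 1) (hΔ : 0 ≤ Δ)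
    (hX : ∀ t, 1 ≤ t → ∀ ω, |X t ω| ≤ 1) (hW : ∀ᵐ ω ∂μ, 0 ≤ W n ω)
    (hlog : ∀ᵐ ω ∂μ, LogWealthBound X W K ω) (hn : 1 ≤ n)
    (hthr : log (1 / α) + 2 * K * log (4 * n) ≤ Δ ^ 2 * n / 32) :
    μ {ω | (n : ℕ∞) < stopTime W α ω} ≤ μ {ω | ∑ j ∈ Icc 1 n, X j ω ≤ Δ * n / 2} := by
  refine measure_mono_ae ?_
  filter_upwards [hW, hlog] with ω hWω hlogω hlt
  by_contra hS
  refine not_le.2 hlt (stopTime_le_of_log_le hn hα hα1 hWω ?_)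
  have hcard : (#(Icc 1 n) : ℝ) = n := by simp
  have hsq := le_sq_sum_div_sum_sq_add_abs (Icc 1 n) (X · ω)
    (fun j hj => hX j (mem_Icc.1 hj).1 ω) (c := Δ / 2) (by positivity)
    (by rw [hcard]; linarith [not_le.1 hS])
  rw [hcard] at hsq
  linarith [hlogω n hn]

theorem expStopTime_le_of_logWealthBound [IsProbabilityMeasure μ] (hK : 1 ≤ K) (hΔ : 0 < Δ)
    (hα : α ∈ Set.Ioo (0 : ℝ) 1) (hXmeas : ∀ t, Measurable (X t))
    (hXbdd : ∀ t, 1 ≤ t → ∀ ω, |X t ω| ≤ 1) (hindep : iIndepFun (fun t => X (t + 1)) μ)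
    (hmean : ∀ t, 1 ≤ t → Δ ≤ μ[X t]) (hW : ∀ t, 1 ≤ t → ∀ᵐ ω ∂μ, 0 ≤ W t ω)
    (hlog : ∀ᵐ ω ∂μ, LogWealthBound X W K ω) :
    expStopTime μ W α ≤ ENNReal.ofReal (onsHorizon K Δ α + π ^ 2 / 6) := by
  obtain ⟨hα0, hα1⟩ := hα
  have hΔ1 : Δ ≤ 1 := by
    have := norm_integral_le_of_norm_le_const (μ := μ) (f := X 1) (C := 1)
      (ae_of_all μ (hXbdd 1 le_rfl))
    simp only [probReal_univ, mul_one, Real.norm_eq_abs] at this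
    exact (hmean 1 le_rfl).trans ((le_abs_self _).trans this)
  have hshift : ∀ n ω, ∑ j ∈ Icc 1 n, X j ω = ∑ j ∈ range n, X (j + 1) ω := fun n ω => by
    rw [← Ico_add_one_right_eq_Icc, sum_Ico_eq_sum_range]; simp [add_comm]
  refine tsum_le_ofReal_add_pi_sq_div_six _ (onsHorizon_nonneg hK hΔ hΔ1 hα0 hα1.le)
    (fun _ => prob_le_one) fun t ht => ?_
  have hpos : (0 : ℝ) < t + 1 := by positivity
  calc μ {ω | ((t + 1 : ℕ) : ℕ∞) < stopTime W α ω}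
      ≤ μ {ω | ∑ j ∈ Icc 1 (t + 1), X j ω ≤ Δ * (t + 1 : ℕ) / 2} :=
        measure_lt_stopTime_le_measure_sum_le hα0 hα1 hΔ.le hXbdd (hW _ (by omega)) hlog
          (by omega) (by push_cast; exact
            log_one_div_add_log_le_of_onsHorizon_le hK hΔ hΔ1 hα0 hα1.le hpos ht)
    _ ≤ ENNReal.ofReal (exp (-Δ ^ 2 * (t + 1 : ℕ) / 8)) := by
        simp_rw [hshift]
        exact measure_sum_range_le_half_le_exp hΔ.le (fun j => (hXmeas _).aemeasurable) hindep
          (fun j => ae_of_all _ fun ω => abs_le.1 (hXbdd _ (by omega) ω))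
          (fun j => hmean _ (by omega)) _
    _ ≤ ENNReal.ofReal (1 / ((t : ℝ) + 1) ^ 2) := ENNReal.ofReal_le_ofReal <| by
        push_cast
        exact exp_neg_le_one_div_sq_of_onsHorizon_le hK hΔ hΔ1 hα0 hα1.le hpos ht

end ScalarTest

lemma exists_sum_abs_eq_one_sum_mul_eq_iSup_abs {ι : Type*} [Fintype ι] [Nonempty ι]
    (a : ι → ℝ) : ∃ u : ι → ℝ, ∑ i, |u i| = 1 ∧ ∑ i, u i * a i = ⨆ i, |a i| := by
  classical
  obtain ⟨i₀, hi₀⟩ := Finite.exists_max fun i => |a i|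
  refine ⟨Pi.single i₀ (if 0 ≤ a i₀ then 1 else -1), ?_, ?_⟩
  · simp [Pi.single_apply, apply_ite]
  · rw [le_antisymm (ciSup_le hi₀) (le_ciSup (Finite.bddAbove_range fun i => |a i|) i₀)]
    split_ifs with h
    · simp [Pi.single_apply, abs_of_nonneg h]
    · simp [Pi.single_apply, abs_of_neg (not_le.1 h)]

lemma abs_sum_mul_le_sum_abs {ι : Type*} (s : Finset ι) (u z : ι → ℝ)
    (hz : ∀ i ∈ s, |z i| ≤ 1) : |∑ i ∈ s, u i * z i| ≤ ∑ i ∈ s, |u i| :=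
  (abs_sum_le_sum_abs _ _).trans <| sum_le_sum fun i hi => by
    rw [abs_mul]
    exact mul_le_of_le_one_right (abs_nonneg _) (hz i hi)

theorem mv_ons_expected_stopping_time_general
    {Ω : Type*} {m : MeasurableSpace Ω} {μ : Measure Ω} [IsProbabilityMeasure μ]
    {k : ℕ}
    (Z : ℕ → Ω → (Fin k → ℝ)) (W : ℕ → Ω → ℝ) (Δm : ℝ)
    (hZmeas : ∀ t : ℕ, Measurable (Z t))
    (hZbdd : ∀ t : ℕ, 1 ≤ t → ∀ ω, ∀ i, Z t ω i ∈ Set.Icc (-1 : ℝ) 1)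
    (hiid : iIndepFun
      (fun t : ℕ => Z (t + 1)) μ)
    (hident : ∀ t : ℕ, 1 ≤ t → IdentDistrib (Z t) (Z 1) μ μ)
    (hΔm : Δm = ⨆ i : Fin k, |∫ ω, Z 1 ω i ∂μ|) (hΔmpos : 0 < Δm)
    (hWnonneg : ∀ t : ℕ, 1 ≤ t → ∀ᵐ ω ∂μ, 0 ≤ W t ω)
    (hlogW : ∀ᵐ ω ∂μ, ∀ t : ℕ, 1 ≤ t → ∀ u : Fin k → ℝ, (∑ i, |u i|) = 1 →
      (1 / 4) * ((∑ j ∈ Finset.Icc 1 t, ∑ i, u i * Z j ω i) ^ 2 /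
          ((∑ j ∈ Finset.Icc 1 t, (∑ i, u i * Z j ω i) ^ 2) +
            |∑ j ∈ Finset.Icc 1 t, ∑ i, u i * Z j ω i|)) -
        2 * k * Real.log (4 * t) ≤ Real.log (W t ω))
    {α : ℝ} (hα : α ∈ Set.Ioo (0 : ℝ) 1) :
    expStopTime μ W α ≤
      ENNReal.ofReal ((288 * k / Δm ^ 2) * Real.log (576 * k / Δm ^ 2) +
        (72 / Δm ^ 2) * Real.log (72 / Δm ^ 2) +
        (72 / Δm ^ 2) * Real.log (1 / α) + Real.pi ^ 2 / 6) := by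
  have hk : 0 < k := Nat.pos_of_ne_zero fun hk => by subst hk; simp [hΔm] at hΔmpos
  have : Nonempty (Fin k) := Fin.pos_iff_nonempty.1 hk
  obtain ⟨u, hu, huΔ⟩ := exists_sum_abs_eq_one_sum_mul_eq_iSup_abs fun i => ∫ ω, Z 1 ω i ∂μ
  have hproj : Measurable fun z : Fin k → ℝ => ∑ i, u i * z i := by fun_prop
  have hZint : ∀ i, Integrable (fun ω => Z 1 ω i) μ := fun i =>
    .of_mem_Icc (-1) 1 ((measurable_pi_apply i).comp (hZmeas 1)).aemeasurable
      (ae_of_all _ fun ω => hZbdd 1 le_rfl ω i)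
  have hmean : ∀ t, 1 ≤ t → Δm ≤ ∫ ω, ∑ i, u i * Z t ω i ∂μ := fun t ht => by
    have := ((hident t ht).comp hproj).integral_eq
    simp only [Function.comp_def] at this
    rw [this, integral_finsetSum _ fun i _ => (hZint i).const_mul _]
    simp_rw [integral_const_mul]
    rw [huΔ, hΔm]
  exact expStopTime_le_of_logWealthBound (X := fun t ω => ∑ i, u i * Z t ω i) (K := k)
    (by exact_mod_cast hk) hΔmpos hα (fun t => hproj.comp (hZmeas t))
    (fun t ht ω => hu ▸ abs_sum_mul_le_sum_abs _ _ _ fun i _ => abs_le.2 (hZbdd t ht ω i))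
    (hiid.comp (fun _ => _) fun _ => hproj) hmean hWnonneg
    (hlogW.mono fun ω h t ht => h t ht u hu)

/-- **Expected stopping time of the multivariate ONS test.**  Let `(Z t)_{t ≥ 1}` be i.i.d.
random vectors in `[-1,1]^k` with `Δm = ‖E[Z 1]‖_∞ > 0`, and let `(W t)_{t ≥ 1}` be a
nonnegative process satisfying, almost surely for all `t ≥ 1` and all `u` with `‖u‖₁ = 1`,
`ln (W t) ≥ (1/4) (∑_{j≤t} ⟪u, Z j⟫)² / (∑_{j≤t} ⟪u, Z j⟫² + |∑_{j≤t} ⟪u, Z j⟫|) - 2k ln (4t)`.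
Then for `α ∈ (0,1)` the stopping time `τ = inf {t ≥ 1 : W t ≥ 1/α}` satisfies
`E[τ] ≤ (288k/Δm²) ln (576k/Δm²) + (72/Δm²) ln (72/Δm²) + (72/Δm²) ln (1/α) + π²/6`. -/
theorem mv_ons_expected_stopping_time
    {Ω : Type*} {m : MeasurableSpace Ω} {μ : Measure Ω} [IsProbabilityMeasure μ]
    {k : ℕ}
    (Z : ℕ → Ω → (Fin k → ℝ)) (W : ℕ → Ω → ℝ) (Δm : ℝ)
    (hZmeas : ∀ t : ℕ, Measurable (Z t))
    (hZbdd : ∀ t : ℕ, 1 ≤ t → ∀ ω, ∀ i, Z t ω i ∈ Set.Icc (-1 : ℝ) 1)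
    (hiid : iIndepFun
      (fun t : ℕ => Z (t + 1)) μ)
    (hident : ∀ t : ℕ, 1 ≤ t → IdentDistrib (Z t) (Z 1) μ μ)
    (hΔm : Δm = ⨆ i : Fin k, |∫ ω, Z 1 ω i ∂μ|) (hΔmpos : 0 < Δm)
    (hWmeas : ∀ t : ℕ, Measurable (W t))
    (hWnonneg : ∀ t : ℕ, 1 ≤ t → ∀ᵐ ω ∂μ, 0 ≤ W t ω)
    (hlogW : ∀ᵐ ω ∂μ, ∀ t : ℕ, 1 ≤ t → ∀ u : Fin k → ℝ, (∑ i, |u i|) = 1 →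
      (1 / 4) * ((∑ j ∈ Finset.Icc 1 t, ∑ i, u i * Z j ω i) ^ 2 /
          ((∑ j ∈ Finset.Icc 1 t, (∑ i, u i * Z j ω i) ^ 2) +
            |∑ j ∈ Finset.Icc 1 t, ∑ i, u i * Z j ω i|)) -
        2 * k * Real.log (4 * t) ≤ Real.log (W t ω))
    {α : ℝ} (hα : α ∈ Set.Ioo (0 : ℝ) 1) :
    expStopTime μ W α ≤
      ENNReal.ofReal ((288 * k / Δm ^ 2) * Real.log (576 * k / Δm ^ 2) +
        (72 / Δm ^ 2) * Real.log (72 / Δm ^ 2) +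
        (72 / Δm ^ 2) * Real.log (1 / α) + Real.pi ^ 2 / 6) :=
  mv_ons_expected_stopping_time_general (m := m) Z W Δm hZmeas hZbdd hiid hident hΔm hΔmpos hWnonneg
    hlogW hα
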